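/- arXiv:2111.14536 — 2 statements merged into one kernel-verified Lean document; each statement's English description precedes it below -/
import Mathlib

section
/- Let X ∈ ℝ^{m×n}, U ∈ ℝ^{m×r}, V, V' ∈ ℝ^{r×n}, and define h(U,V) = ‖X − U·V‖_F². Then h(U,V') − h(U,V) ≤ ⟨V' − V, ∇_V h(U,V)⟩_F + (L_V/2)·‖V' − V‖_F², where ∇_V h(U,V) = −2Uᵀ·(X − U·V) and L_V = 2σ₁(Uᵀ·U) with σ₁ the largest eigenvalue of the symmetric matrix Uᵀ·U. -/
open Matrix

/-- The largest eigenvalue of a real symmetric (Hermitian) matrix. -/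
noncomputable def maxEigenvalue {r : ℕ} (S : Matrix (Fin r) (Fin r) ℝ) : ℝ :=
  if h : S.IsHermitian then ⨆ i, h.eigenvalues i else 0

/-!
Write `D = V' - V` and `E = X - U V`, so that `X - U V' = E - U D`. Expanding the square,
`h(U,V') - h(U,V) = ⟨D, -2 Uᵀ E⟩_F + tr(Dᵀ (Uᵀ U) D)`, and the quadratic term is at most
`σ₁(Uᵀ U) ‖D‖_F²` because `σ₁(S) • 1 - S` is positive semidefinite for symmetric `S`.
-/

namespace Matrix

variable {k m n : Type*} [Fintype k] [Fintype m] [Fintype n]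

open scoped MatrixOrder in
theorem IsHermitian.posSemidef_iSup_eigenvalues_smul_one_sub [DecidableEq n]
    {S : Matrix n n ℝ} (hS : S.IsHermitian) :
    ((⨆ i, hS.eigenvalues i) • (1 : Matrix n n ℝ) - S).PosSemidef := by
  rw [← Algebra.algebraMap_eq_smul_one, ← le_iff]
  refine le_algebraMap_of_spectrum_le (fun x hx => ?_) hS.isSelfAdjoint
  rw [hS.spectrum_real_eq_range_eigenvalues] at hx
  obtain ⟨i, rfl⟩ := hx
  exact le_ciSup (Set.finite_range _).bddAbove i

theorem IsHermitian.trace_transpose_mul_mul_le [DecidableEq k] {S : Matrix k k ℝ}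
    (hS : S.IsHermitian) (D : Matrix k n ℝ) :
    trace (Dᵀ * S * D) ≤ (⨆ i, hS.eigenvalues i) * trace (Dᵀ * D) := by
  have hpsd : (Dᵀ * ((⨆ i, hS.eigenvalues i) • 1 - S) * D).PosSemidef := by
    simpa using hS.posSemidef_iSup_eigenvalues_smul_one_sub.conjTranspose_mul_mul_same D
  have htrace := hpsd.trace_nonneg
  rw [Matrix.mul_sub, Matrix.sub_mul, Matrix.mul_smul, Matrix.mul_one, Matrix.smul_mul,
    trace_sub, trace_smul, smul_eq_mul] at htrace
  linarith

theorem trace_transpose_mul_self_sub_mul (E : Matrix m n ℝ) (U : Matrix m k ℝ)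
    (D : Matrix k n ℝ) :
    trace ((E - U * D)ᵀ * (E - U * D)) =
      trace (Eᵀ * E) - 2 * trace (Dᵀ * (Uᵀ * E)) + trace (Dᵀ * (Uᵀ * U) * D) := by
  have hcross : trace (Eᵀ * (U * D)) = trace (Dᵀ * (Uᵀ * E)) := by
    rw [← trace_transpose, transpose_mul, transpose_transpose, transpose_mul, Matrix.mul_assoc]
  simp only [transpose_sub, transpose_mul, Matrix.sub_mul, Matrix.mul_sub, trace_sub,
    Matrix.mul_assoc] at hcross ⊢
  rw [hcross]
  ring

end Matrix

theorem maxEigenvalue_eq_iSup_eigenvalues {r : ℕ} {S : Matrix (Fin r) (Fin r) ℝ}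
    (hS : S.IsHermitian) : maxEigenvalue S = ⨆ i, hS.eigenvalues i :=
  dif_pos hS

/-- Descent lemma in `V` for `h(U,V) = ‖X - U*V‖_F²`:
`h(U,V') - h(U,V) ≤ ⟨V' - V, ∇_V h(U,V)⟩_F + (L_V/2)‖V' - V‖_F²` with
`∇_V h(U,V) = -2 Uᵀ (X - U*V)` and `L_V = 2 σ₁(Uᵀ U)`.
Frobenius inner product is `trace (Aᵀ * B)`, Frobenius norm squared is `trace (Aᵀ * A)`. -/
theorem stmt_5 {m n r : ℕ} (X : Matrix (Fin m) (Fin n) ℝ)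
    (U : Matrix (Fin m) (Fin r) ℝ) (V V' : Matrix (Fin r) (Fin n) ℝ) :
    Matrix.trace ((X - U * V')ᵀ * (X - U * V')) -
        Matrix.trace ((X - U * V)ᵀ * (X - U * V)) ≤
      Matrix.trace ((V' - V)ᵀ * ((-2 : ℝ) • (Uᵀ * (X - U * V))))
        + 2 * maxEigenvalue (Uᵀ * U) / 2 *
            Matrix.trace ((V' - V)ᵀ * (V' - V)) := by
  have hS : (Uᵀ * U).IsHermitian := by
    simpa using isHermitian_conjTranspose_mul_self U
  have hresidual : X - U * V' = (X - U * V) - U * (V' - V) := by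
    rw [Matrix.mul_sub]; abel
  have hexpand := trace_transpose_mul_self_sub_mul (X - U * V) U (V' - V)
  have hquad := hS.trace_transpose_mul_mul_le (V' - V)
  rw [hresidual, hexpand, Matrix.mul_smul, trace_smul, smul_eq_mul,
    maxEigenvalue_eq_iSup_eigenvalues hS]
  linarith
end

section
/- Let X ∈ ℝ^{m×n}, U ∈ ℝ^{m×r}, V, V' ∈ ℝ^{r×n}, and define h(U,V) = ‖X − U·V‖_F². Suppose λ ∈ ℝ and V' satisfies the proximal descent condition ⟨V' − V, ∇_V h(U,V)⟩_F + (λ/2)·‖V' − V‖_F² ≤ 0, where ∇_V h(U,V) = −2Uᵀ·(X − U·V). Then h(U,V') ≤ h(U,V) − ((λ − L_V)/2)·‖V' − V‖_F², where L_V = 2σ₁(Uᵀ·U) with σ₁ the largest eigenvalue of Uᵀ·U. In particular, if λ ≥ L_V then h(U,V') ≤ h(U,V). -/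
open Matrix

/-!
`h(U, ·)` is a quadratic function of `V`, so its second-order Taylor expansion at `V` is exact:
`h(U,V') = h(U,V) + ⟨V' - V, ∇_V h(U,V)⟩_F + ‖U (V' - V)‖_F²`. The proximal condition bounds the
linear term by `-(λ/2)‖V' - V‖_F²`, and the quadratic term is at most `σ₁(UᵀU)‖V' - V‖_F²` because
`UᵀU ≤ σ₁(UᵀU) • 1` in the Loewner order.
-/

open scoped MatrixOrder

section Expansion

variable {ι κ ρ R : Type*} [Fintype ι] [Fintype κ] [Fintype ρ] [CommRing R]

lemma trace_transpose_mul_self_sub (A B : Matrix ι κ R) :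
    trace ((A - B)ᵀ * (A - B)) = trace (Aᵀ * A) - 2 * trace (Bᵀ * A) + trace (Bᵀ * B) := by
  have hsymm : trace (Aᵀ * B) = trace (Bᵀ * A) := by
    rw [← trace_transpose, transpose_mul, transpose_transpose]
  simp only [transpose_sub, Matrix.sub_mul, Matrix.mul_sub, trace_sub, hsymm]
  ring

lemma trace_transpose_mul_self_sub_mul_eq (X : Matrix ι κ R) (U : Matrix ι ρ R)
    (V V' : Matrix ρ κ R) :
    trace ((X - U * V')ᵀ * (X - U * V')) =
      trace ((X - U * V)ᵀ * (X - U * V)) + trace ((V' - V)ᵀ * ((-2 : R) • (Uᵀ * (X - U * V))))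
        + trace ((U * (V' - V))ᵀ * (U * (V' - V))) := by
  have hres : X - U * V' = (X - U * V) - U * (V' - V) := by
    rw [Matrix.mul_sub]; abel
  have hgrad : trace ((V' - V)ᵀ * ((-2 : R) • (Uᵀ * (X - U * V)))) =
      -2 * trace ((U * (V' - V))ᵀ * (X - U * V)) := by
    rw [Matrix.mul_smul, trace_smul, transpose_mul, Matrix.mul_assoc, smul_eq_mul]
  rw [hres, trace_transpose_mul_self_sub, hgrad]
  ring

end Expansion

section Spectral

variable {ι κ : Type*} [Fintype ι] [Fintype κ]

lemma trace_transpose_mul_self_nonneg (D : Matrix ι κ ℝ) : 0 ≤ trace (Dᵀ * D) := by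
  simpa only [conjTranspose_eq_transpose_of_trivial] using
    (posSemidef_conjTranspose_mul_self D).trace_nonneg

lemma Matrix.IsHermitian.trace_transpose_mul_mul_le_s7 [DecidableEq ι] {S : Matrix ι ι ℝ}
    (hS : S.IsHermitian) {c : ℝ} (hc : ∀ i, hS.eigenvalues i ≤ c) (D : Matrix ι κ ℝ) :
    trace (Dᵀ * S * D) ≤ c * trace (Dᵀ * D) := by
  have hle : S ≤ algebraMap ℝ _ c := by
    refine le_algebraMap_of_spectrum_le ?_ hS
    rw [hS.spectrum_real_eq_range_eigenvalues]
    rintro _ ⟨i, rfl⟩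
    exact hc i
  have hgap := ((Matrix.le_iff.mp hle).conjTranspose_mul_mul_same D).trace_nonneg
  simpa [conjTranspose_eq_transpose_of_trivial, Matrix.mul_sub, Matrix.sub_mul,
    Algebra.algebraMap_eq_smul_one, trace_sub] using hgap

end Spectral

lemma Matrix.IsHermitian.eigenvalues_le_maxEigenvalue {r : ℕ} {S : Matrix (Fin r) (Fin r) ℝ}
    (hS : S.IsHermitian) (i : Fin r) : hS.eigenvalues i ≤ maxEigenvalue S := by
  rw [maxEigenvalue, dif_pos hS]
  exact le_ciSup (Set.finite_range _).bddAbove i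

lemma trace_transpose_mul_self_mul_le_maxEigenvalue {m n r : ℕ} (U : Matrix (Fin m) (Fin r) ℝ)
    (D : Matrix (Fin r) (Fin n) ℝ) :
    trace ((U * D)ᵀ * (U * D)) ≤ maxEigenvalue (Uᵀ * U) * trace (Dᵀ * D) := by
  have hS : (Uᵀ * U).IsHermitian := by
    simpa only [conjTranspose_eq_transpose_of_trivial] using isHermitian_conjTranspose_mul_self U
  rw [transpose_mul, ← Matrix.mul_assoc, Matrix.mul_assoc Dᵀ]
  exact hS.trace_transpose_mul_mul_le_s7 hS.eigenvalues_le_maxEigenvalue D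

/-- If `V'` satisfies the proximal descent condition
`⟨V' - V, ∇_V h(U,V)⟩_F + (λ/2)‖V' - V‖_F² ≤ 0` with `∇_V h(U,V) = -2 Uᵀ (X - U*V)`,
then `h(U,V') ≤ h(U,V) - ((λ - L_V)/2)‖V' - V‖_F²` where `L_V = 2 σ₁(Uᵀ U)`;
in particular `h(U,V') ≤ h(U,V)` whenever `λ ≥ L_V`. Here `h(U,V) = ‖X - U*V‖_F²`,
the Frobenius inner product is `trace (Aᵀ * B)` and `‖A‖_F² = trace (Aᵀ * A)`. -/
theorem stmt_7 {m n r : ℕ} (X : Matrix (Fin m) (Fin n) ℝ)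
    (U : Matrix (Fin m) (Fin r) ℝ) (V V' : Matrix (Fin r) (Fin n) ℝ) (lam : ℝ)
    (hprox : Matrix.trace ((V' - V)ᵀ * ((-2 : ℝ) • (Uᵀ * (X - U * V))))
        + lam / 2 * Matrix.trace ((V' - V)ᵀ * (V' - V)) ≤ 0) :
    Matrix.trace ((X - U * V')ᵀ * (X - U * V')) ≤
      Matrix.trace ((X - U * V)ᵀ * (X - U * V))
        - (lam - 2 * maxEigenvalue (Uᵀ * U)) / 2 *
            Matrix.trace ((V' - V)ᵀ * (V' - V)) ∧
    (2 * maxEigenvalue (Uᵀ * U) ≤ lam →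
      Matrix.trace ((X - U * V')ᵀ * (X - U * V')) ≤
        Matrix.trace ((X - U * V)ᵀ * (X - U * V))) := by
  have hexpand := trace_transpose_mul_self_sub_mul_eq X U V V'
  have hcurv := trace_transpose_mul_self_mul_le_maxEigenvalue U (V' - V)
  have hdescent : Matrix.trace ((X - U * V')ᵀ * (X - U * V')) ≤
      Matrix.trace ((X - U * V)ᵀ * (X - U * V))
        - (lam - 2 * maxEigenvalue (Uᵀ * U)) / 2 * Matrix.trace ((V' - V)ᵀ * (V' - V)) := by
    rw [hexpand]; linarith
  refine ⟨hdescent, fun hlam => ?_⟩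
  have hgain : 0 ≤ (lam - 2 * maxEigenvalue (Uᵀ * U)) / 2 * Matrix.trace ((V' - V)ᵀ * (V' - V)) :=
    mul_nonneg (by linarith) (trace_transpose_mul_self_nonneg _)
  linarith
end
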